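/- Fix an integer n ≥ 4. Let π_L : ℝ^{2n−1} → ℝⁿ × ℝⁿ be the left projection of the model folded cross cap canonical relation: π_L(x, y_{n−1}, θ'') = (x, (θ₁, …, θ_{n−2}, −2x_{n−1}y_{n−1}θ₁, (y_{n−1}² + 2x_n y_{n−1})θ₁)). Then at every point p = (x, y_{n−1}, θ'') with θ₁ ≠ 0: the derivative Dπ_L(p) has rank 2n−2 if x_{n−1} = 0 and x_n + y_{n−1} = 0, and rank 2n−1 otherwise. -/

import Mathlib

/-- The left projection `π_L` of the model folded cross cap canonical relation.
Points of `ℝ^{2n-1}` are written `(x, y_{n-1}, θ'')` with `x = (x₁, …, x_n)`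
(indexed by `0, …, n-1`), `y_{n-1} ∈ ℝ`, `θ'' = (θ₁, …, θ_{n-2})` (indexed by
`0, …, n-3`).  Then
`π_L(x, y_{n-1}, θ'') = (x, (θ₁, …, θ_{n-2}, -2 x_{n-1} y_{n-1} θ₁,
(y_{n-1}² + 2 x_n y_{n-1}) θ₁))`. -/
noncomputable def piL (n : ℕ) (hn : 4 ≤ n)
    (p : (Fin n → ℝ) × ℝ × (Fin (n - 2) → ℝ)) :
    (Fin n → ℝ) × (Fin n → ℝ) :=
  ⟨p.1, fun i =>
    if h1 : (i : ℕ) = n - 2 then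
      -2 * p.1 ⟨n - 2, by omega⟩ * p.2.1 * p.2.2 ⟨0, by omega⟩
    else if h2 : (i : ℕ) = n - 1 then
      (p.2.1 ^ 2 + 2 * p.1 ⟨n - 1, by omega⟩ * p.2.1) * p.2.2 ⟨0, by omega⟩
    else p.2.2 ⟨(i : ℕ), by have := i.isLt; omega⟩⟩

noncomputable def Dmap (n : ℕ) (hn : 4 ≤ n)
    (p : (Fin n → ℝ) × ℝ × (Fin (n - 2) → ℝ)) :
    ((Fin n → ℝ) × ℝ × (Fin (n - 2) → ℝ)) →ₗ[ℝ] (Fin n → ℝ) where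
  toFun v := fun i =>
    if _ : (i : ℕ) = n - 2 then
      -2 * p.2.2 ⟨0, by omega⟩ * p.2.1 * v.1 ⟨n - 2, by omega⟩
        + -2 * p.1 ⟨n - 2, by omega⟩ * p.2.2 ⟨0, by omega⟩ * v.2.1
        + -2 * p.1 ⟨n - 2, by omega⟩ * p.2.1 * v.2.2 ⟨0, by omega⟩
    else if _ : (i : ℕ) = n - 1 then
      2 * p.2.1 * p.2.2 ⟨0, by omega⟩ * v.1 ⟨n - 1, by omega⟩
        + (2 * p.2.1 + 2 * p.1 ⟨n - 1, by omega⟩) * p.2.2 ⟨0, by omega⟩ * v.2.1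
        + (p.2.1 ^ 2 + 2 * p.1 ⟨n - 1, by omega⟩ * p.2.1) * v.2.2 ⟨0, by omega⟩
    else v.2.2 ⟨(i : ℕ), by have := i.isLt; omega⟩
  map_add' v w := by
    funext i
    simp only [Prod.fst_add, Prod.snd_add, Pi.add_apply]
    split_ifs <;> ring
  map_smul' r v := by
    funext i
    simp only [Prod.smul_fst, Prod.smul_snd, Pi.smul_apply, smul_eq_mul, RingHom.id_apply]
    split_ifs <;> ring

noncomputable def Lclm (n : ℕ) (hn : 4 ≤ n)
    (p : (Fin n → ℝ) × ℝ × (Fin (n - 2) → ℝ)) :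
    ((Fin n → ℝ) × ℝ × (Fin (n - 2) → ℝ)) →L[ℝ] (Fin n → ℝ) × (Fin n → ℝ) :=
  (ContinuousLinearMap.fst ℝ (Fin n → ℝ) (ℝ × (Fin (n - 2) → ℝ))).prod
    (Dmap n hn p).toContinuousLinearMap

theorem hasF (n : ℕ) (hn : 4 ≤ n) (p : (Fin n → ℝ) × ℝ × (Fin (n - 2) → ℝ)) :
    HasFDerivAt (piL n hn) (Lclm n hn p) p := by
  have hG : HasFDerivAt (fun q : ((Fin n → ℝ) × ℝ × (Fin (n - 2) → ℝ)) => (piL n hn q).2)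
      (Dmap n hn p).toContinuousLinearMap p := by
    rw [hasFDerivAt_pi']
    intro i
    have A1 := ((ContinuousLinearMap.proj (R := ℝ) (φ := fun _ : Fin n => ℝ)
      ⟨n - 2, by omega⟩).comp
      (ContinuousLinearMap.fst ℝ (Fin n → ℝ) (ℝ × (Fin (n - 2) → ℝ)))).hasFDerivAt (x := p)
    have A1' := ((ContinuousLinearMap.proj (R := ℝ) (φ := fun _ : Fin n => ℝ)
      ⟨n - 1, by omega⟩).comp
      (ContinuousLinearMap.fst ℝ (Fin n → ℝ) (ℝ × (Fin (n - 2) → ℝ)))).hasFDerivAt (x := p)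
    have A2 := ((ContinuousLinearMap.fst ℝ ℝ (Fin (n - 2) → ℝ)).comp
      (ContinuousLinearMap.snd ℝ (Fin n → ℝ) (ℝ × (Fin (n - 2) → ℝ)))).hasFDerivAt (x := p)
    have A3 := ((ContinuousLinearMap.proj (R := ℝ) (φ := fun _ : Fin (n - 2) => ℝ)
      ⟨0, by omega⟩).comp
      ((ContinuousLinearMap.snd ℝ ℝ (Fin (n - 2) → ℝ)).comp
        (ContinuousLinearMap.snd ℝ (Fin n → ℝ) (ℝ × (Fin (n - 2) → ℝ))))).hasFDerivAt (x := p)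
    by_cases h1 : (i : ℕ) = n - 2
    · have hi : i = (⟨n - 2, by clear h1; omega⟩ : Fin n) := Fin.ext h1
      subst hi
      simp only [piL, dif_pos h1, Fin.val_mk, eq_self_iff_true, dite_true]
      refine HasFDerivAt.congr_fderiv (((A1.const_mul (-2 : ℝ)).mul A2).mul A3) ?_
      refine ContinuousLinearMap.ext fun v => ?_
      simp only [Dmap, ContinuousLinearMap.add_apply, ContinuousLinearMap.smul_apply,
        ContinuousLinearMap.comp_apply, ContinuousLinearMap.proj_apply,
        ContinuousLinearMap.coe_fst', ContinuousLinearMap.coe_snd',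
        LinearMap.coe_toContinuousLinearMap', LinearMap.coe_mk, AddHom.coe_mk,
        smul_eq_mul, dif_pos h1, Fin.val_mk, eq_self_iff_true, dite_true, Pi.mul_apply]
      ring
    · by_cases h2 : (i : ℕ) = n - 1
      · have hi : i = (⟨n - 1, by clear h1 h2; omega⟩ : Fin n) := Fin.ext h2
        subst hi
        simp only [piL, dif_neg h1, dif_pos h2, Fin.val_mk, eq_self_iff_true, dite_true,
          pow_two]
        refine HasFDerivAt.congr_fderiv
          (((A2.mul A2).add ((A1'.const_mul (2 : ℝ)).mul A2)).mul A3) ?_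
        refine ContinuousLinearMap.ext fun v => ?_
        simp only [Dmap, ContinuousLinearMap.add_apply, ContinuousLinearMap.smul_apply,
          ContinuousLinearMap.comp_apply, ContinuousLinearMap.proj_apply,
          ContinuousLinearMap.coe_fst', ContinuousLinearMap.coe_snd',
          LinearMap.coe_toContinuousLinearMap', LinearMap.coe_mk, AddHom.coe_mk,
          smul_eq_mul, dif_neg h1, dif_pos h2, Pi.add_apply, Fin.val_mk, eq_self_iff_true,
          dite_true, pow_two, Pi.mul_apply]
        ring
      · simp only [piL, dif_neg h1, dif_neg h2]
        refine HasFDerivAt.congr_fderiv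
          (((ContinuousLinearMap.proj (R := ℝ) (φ := fun _ : Fin (n - 2) => ℝ)
            ⟨(i : ℕ), by have := i.isLt; omega⟩).comp
            ((ContinuousLinearMap.snd ℝ ℝ (Fin (n - 2) → ℝ)).comp
              (ContinuousLinearMap.snd ℝ (Fin n → ℝ)
                (ℝ × (Fin (n - 2) → ℝ))))).hasFDerivAt (x := p)) ?_
        refine ContinuousLinearMap.ext fun v => ?_
        simp only [Dmap, ContinuousLinearMap.comp_apply, ContinuousLinearMap.proj_apply,
          ContinuousLinearMap.coe_snd', LinearMap.coe_toContinuousLinearMap',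
          LinearMap.coe_mk, AddHom.coe_mk, dif_neg h1, dif_neg h2]
  exact HasFDerivAt.prodMk hasFDerivAt_fst hG

theorem Dmap_evalA (n : ℕ) (hn : 4 ≤ n) (p v : (Fin n → ℝ) × ℝ × (Fin (n - 2) → ℝ)) :
    Dmap n hn p v ⟨n - 2, by have := hn; omega⟩ =
      -2 * p.2.2 ⟨0, by have := hn; omega⟩ * p.2.1 * v.1 ⟨n - 2, by have := hn; omega⟩
        + -2 * p.1 ⟨n - 2, by have := hn; omega⟩ * p.2.2 ⟨0, by have := hn; omega⟩ * v.2.1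
        + -2 * p.1 ⟨n - 2, by have := hn; omega⟩ * p.2.1 * v.2.2 ⟨0, by have := hn; omega⟩ := by
  simp only [Dmap, LinearMap.coe_mk, AddHom.coe_mk]
  rfl

theorem Dmap_evalB (n : ℕ) (hn : 4 ≤ n) (p v : (Fin n → ℝ) × ℝ × (Fin (n - 2) → ℝ)) :
    Dmap n hn p v ⟨n - 1, by have := hn; omega⟩ =
      2 * p.2.1 * p.2.2 ⟨0, by have := hn; omega⟩ * v.1 ⟨n - 1, by have := hn; omega⟩
        + (2 * p.2.1 + 2 * p.1 ⟨n - 1, by have := hn; omega⟩) * p.2.2 ⟨0, by have := hn; omega⟩ * v.2.1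
        + (p.2.1 ^ 2 + 2 * p.1 ⟨n - 1, by have := hn; omega⟩ * p.2.1) * v.2.2 ⟨0, by have := hn; omega⟩ := by
  simp only [Dmap, LinearMap.coe_mk, AddHom.coe_mk]
  rw [dif_neg (show ¬(n - 1 = n - 2) by omega)]
  rfl

theorem Dmap_evalC (n : ℕ) (hn : 4 ≤ n) (p v : (Fin n → ℝ) × ℝ × (Fin (n - 2) → ℝ))
    (j : Fin (n - 2)) :
    Dmap n hn p v ⟨(j : ℕ), by have := j.isLt; omega⟩ = v.2.2 j := by
  simp only [Dmap, LinearMap.coe_mk, AddHom.coe_mk]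
  rw [dif_neg (show ¬((j : ℕ) = n - 2) by have := j.isLt; omega),
    dif_neg (show ¬((j : ℕ) = n - 1) by have := j.isLt; omega)]

/-- at every point with `θ₁ ≠ 0`, the derivative `Dπ_L(p)` has rank `2n-2`
if `x_{n-1} = 0` and `x_n + y_{n-1} = 0`, and rank `2n-1` otherwise. -/
theorem stmt_6 (n : ℕ) (hn : 4 ≤ n)
    (p : (Fin n → ℝ) × ℝ × (Fin (n - 2) → ℝ))
    (hθ : p.2.2 ⟨0, by omega⟩ ≠ 0) :
    ((p.1 ⟨n - 2, by omega⟩ = 0 ∧ p.1 ⟨n - 1, by omega⟩ + p.2.1 = 0) →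
      Module.finrank ℝ (LinearMap.range (fderiv ℝ (piL n hn) p).toLinearMap) = 2 * n - 2) ∧
    (¬ (p.1 ⟨n - 2, by omega⟩ = 0 ∧ p.1 ⟨n - 1, by omega⟩ + p.2.1 = 0) →
      Module.finrank ℝ (LinearMap.range (fderiv ℝ (piL n hn) p).toLinearMap) = 2 * n - 1) := by
  rw [(hasF n hn p).fderiv]
  have hdim : Module.finrank ℝ ((Fin n → ℝ) × ℝ × (Fin (n - 2) → ℝ)) = 2 * n - 1 := by
    rw [Module.finrank_prod, Module.finrank_prod, Module.finrank_fin_fun,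
      Module.finrank_fin_fun, Module.finrank_self]
    omega
  have hrn := LinearMap.finrank_range_add_finrank_ker (Lclm n hn p).toLinearMap
  rw [hdim] at hrn
  have hrange : LinearMap.range (Lclm n hn p).toLinearMap = LinearMap.range (Lclm n hn p).toLinearMap :=
    rfl
  -- generic consequences of being in the kernel
  have hker_comp : ∀ v, (Lclm n hn p).toLinearMap v = 0 →
      v.1 = 0 ∧ (∀ j : Fin (n - 2), v.2.2 j = 0) ∧ (∀ i, Dmap n hn p v i = 0) := by
    intro v hv
    have h1 : v.1 = 0 := congrArg Prod.fst hv
    have h2 : Dmap n hn p v = 0 := congrArg Prod.snd hv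
    have hD : ∀ i, Dmap n hn p v i = 0 := fun i => congrFun h2 i
    refine ⟨h1, fun j => ?_, hD⟩
    rw [← Dmap_evalC n hn p v j]
    exact hD _
  constructor
  · rintro ⟨hb, hc⟩
    have hker : LinearMap.ker (Lclm n hn p).toLinearMap =
        Submodule.span ℝ {((0 : Fin n → ℝ), (1 : ℝ), (0 : Fin (n - 2) → ℝ))} := by
      apply le_antisymm
      · intro v hv
        obtain ⟨h1, h22, _⟩ := hker_comp v (LinearMap.mem_ker.1 hv)
        rw [Submodule.mem_span_singleton]
        refine ⟨v.2.1, ?_⟩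
        refine Prod.ext ?_ (Prod.ext ?_ ?_)
        · simp [h1]
        · simp
        · funext j
          simp [h22 j]
      · rw [Submodule.span_le, Set.singleton_subset_iff, SetLike.mem_coe,
          LinearMap.mem_ker]
        refine Prod.ext rfl ?_
        funext i
        show Dmap n hn p ((0 : Fin n → ℝ), (1 : ℝ), (0 : Fin (n - 2) → ℝ)) i = 0
        simp only [Dmap, LinearMap.coe_mk, AddHom.coe_mk]
        split_ifs with hA hB
        · simp [hb]
        · have : p.1 ⟨n - 1, by omega⟩ = -p.2.1 := by linarith
          simp [this]
        · simp
    have hk1 : Module.finrank ℝ (LinearMap.ker (Lclm n hn p).toLinearMap) = 1 := by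
      rw [hker]
      refine finrank_span_singleton ?_
      intro h
      have := congrArg (fun w => w.2.1) h
      simp at this
    rw [hrange]
    omega
  · intro hnc
    have hker : LinearMap.ker (Lclm n hn p).toLinearMap = ⊥ := by
      rw [eq_bot_iff]
      intro v hv
      obtain ⟨h1, h22, hD⟩ := hker_comp v (LinearMap.mem_ker.1 hv)
      have hA := hD ⟨n - 2, by omega⟩
      rw [Dmap_evalA n hn p v] at hA
      have hB := hD ⟨n - 1, by omega⟩
      rw [Dmap_evalB n hn p v] at hB
      rw [h1] at hA hB
      simp only [Pi.zero_apply, mul_zero, zero_add, add_zero, h22] at hA hB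
      have h21 : v.2.1 = 0 := by
        rcases not_and_or.mp hnc with hb | hc
        · have hne : -2 * p.1 ⟨n - 2, by omega⟩ * p.2.2 ⟨0, by omega⟩ ≠ 0 :=
            mul_ne_zero (mul_ne_zero (by norm_num) hb) hθ
          have := mul_eq_zero.mp hA
          tauto
        · have hne : (2 * p.2.1 + 2 * p.1 ⟨n - 1, by omega⟩) * p.2.2 ⟨0, by omega⟩ ≠ 0 := by
            refine mul_ne_zero ?_ hθ
            intro h
            exact hc (by linarith)
          have := mul_eq_zero.mp hB
          tauto
      simp only [Submodule.mem_bot]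
      refine Prod.ext h1 (Prod.ext h21 ?_)
      funext j
      exact h22 j
    have hk0 : Module.finrank ℝ (LinearMap.ker (Lclm n hn p).toLinearMap) = 0 := by
      rw [hker]
      exact finrank_bot ℝ _
    rw [hrange]
    omega
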